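/- Let n ≥ 3, let P = [2] × [2n−3], and identify lower sets of P with pairs (I_1, I_2) of lower sets of the chain [2n−3] with I_2 ⊆ I_1; write L_j = {1, …, j} ⊆ [2n−3]. Then for every i with 0 ≤ i ≤ n−2, the orbit of the lower set (L_i, L_i) under the reverse operator 𝔛 of P has exactly 2n−1 elements; moreover 𝔛^{2n−1}(L_i, L_i) = (L_i, L_i). -/

import Mathlib

/-- The reverse operator `𝔛` on lower sets of a poset: the lower set generated by
the minimal elements of the complement. -/
def XRev {α : Type*} [PartialOrder α] (I : Set α) : Set α :=
  {x | ∃ y, Minimal (fun z => z ∈ Iᶜ) y ∧ x ≤ y}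

/-- The `𝔛`-orbit of a lower set `I` of a finite poset (forward iteration; since
`𝔛` is a bijection on lower sets of a finite poset, this is the full orbit). -/
def XOrbit {α : Type*} [PartialOrder α] (I : Set α) : Set (Set α) :=
  {J | ∃ k : ℕ, XRev^[k] I = J}

/-- The lower set of `[2] × P` corresponding to a pair `(I₁, I₂)` of lower sets
of `P` with `I₂ ⊆ I₁`: coordinate `0` (the bottom of the chain `[2]`) carries
`I₁` and coordinate `1` carries `I₂`. -/
def pairSet {β : Type*} (I₁ I₂ : Set β) : Set (Fin 2 × β) :=
  {p | if p.1 = 0 then p.2 ∈ I₁ else p.2 ∈ I₂}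

/-- The lower set `L_j = {1, …, j}` of the chain `[k]` realized as `Fin k`. -/
def chainL (k j : ℕ) : Set (Fin k) := {x | (x : ℕ) < j}

/-! Lower sets of `[2] × [m]` are the pairs `(L_a, L_b)` with `b ≤ a ≤ m`. On them `𝔛` sends
`(a, b)` to `(a + 1, b + 1)` when `b < a < m`, `(j, j)` to `(j + 1, 0)` when `j < m`, `(m, b)` to
`(b + 1, b + 1)` when `b < m`, and `(m, m)` to `(0, 0)`. So from `(i, i)` the orbit runs along
`a - b = i + 1` to the diagonal pair `(m - i, m - i)` in `m - i + 1` steps, and then along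
`a - b = m - i + 1` back to `(i, i)` in `i + 1` steps. It meets the diagonal only at these two
pairs, which differ because `m = 2n - 3` is odd; hence `(i, i)` has minimal period `m + 2 = 2n - 1`,
and a periodic orbit has as many elements as its minimal period. -/

namespace Function

variable {α β : Type*} {f : α → α} {x : α}

theorem ncard_range_iterate_eq_minimalPeriod (hx : x ∈ periodicPts f) :
    (Set.range fun k => f^[k] x).ncard = minimalPeriod f x := by
  have hrange :
      (Set.range fun k => f^[k] x) = (fun k => f^[k] x) '' Set.Iio (minimalPeriod f x) := by
    refine (Set.image_subset_range _ _).antisymm' ?_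
    rintro _ ⟨k, rfl⟩
    exact ⟨k % minimalPeriod f x, Nat.mod_lt _ (minimalPeriod_pos_of_mem_periodicPts hx),
      iterate_mod_minimalPeriod_eq⟩
  rw [hrange, iterate_injOn_Iio_minimalPeriod.ncard_image, Set.ncard_Iio_nat]

theorem IsPeriodicPt.minimalPeriod_eq {n : ℕ} (hper : IsPeriodicPt f n x) (hn : 0 < n)
    (hlt : ∀ k, 0 < k → k < n → ¬IsPeriodicPt f k x) :
    minimalPeriod f x = n := by
  refine (hper.minimalPeriod_le hn).antisymm (not_lt.1 fun h => ?_)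
  exact hlt _ (hper.minimalPeriod_pos hn) h (isPeriodicPt_minimalPeriod f x)

theorem minimalPeriod_eq_of_injOn_of_semiconjOn {g : β → β} {e : β → α} {s : Set β}
    (hg : Set.MapsTo g s s) (he : Set.InjOn e s) (hsemi : ∀ y ∈ s, f (e y) = e (g y))
    {y : β} (hy : y ∈ s) : minimalPeriod f (e y) = minimalPeriod g y := by
  have hiter : ∀ k, f^[k] (e y) = e (g^[k] y) := by
    intro k
    induction k with
    | zero => rfl
    | succ k ih => rw [iterate_succ_apply', ih, hsemi _ (hg.iterate k hy), iterate_succ_apply']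
  refine minimalPeriod_eq_minimalPeriod_iff.2 fun k => ?_
  rw [IsPeriodicPt, IsFixedPt, hiter]
  exact he.eq_iff (hg.iterate k hy) hy

end Function

open Function

/-- The minimal elements of the complement of `(L_a, L_b)` are `(0, a)` if `a < m` and `(1, b)`
if `b < a`. -/
def revStep (m : ℕ) (p : ℕ × ℕ) : ℕ × ℕ :=
  (if p.1 < m then p.1 + 1 else if p.2 < p.1 then p.2 + 1 else 0,
    if p.2 < p.1 then p.2 + 1 else 0)

def pairDom (m : ℕ) : Set (ℕ × ℕ) := {p | p.2 ≤ p.1 ∧ p.1 ≤ m}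

theorem revStep_mapsTo (m : ℕ) : Set.MapsTo (revStep m) (pairDom m) (pairDom m) := by
  rintro ⟨a, b⟩ ⟨hba, ham⟩
  simp only [revStep, pairDom, Set.mem_ofPred_eq]
  split_ifs <;> omega

theorem revStep_iterate_of_lt {m a b : ℕ} (hba : b < a) {k : ℕ} (hk : a + k ≤ m) :
    (revStep m)^[k] (a, b) = (a + k, b + k) := by
  induction k with
  | zero => rfl
  | succ k ih =>
    rw [iterate_succ_apply', ih (by omega)]
    simp only [revStep]
    split_ifs <;> first | omega | simp only [Prod.mk.injEq]; omega

theorem revStep_iterate_diag_snd_lt {m j k : ℕ} (hk0 : 0 < k) (hk : k ≤ m - j) :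
    ((revStep m)^[k] (j, j)).2 < ((revStep m)^[k] (j, j)).1 := by
  obtain ⟨k, rfl⟩ := Nat.exists_eq_add_one_of_ne_zero hk0.ne'
  have hstep : revStep m (j, j) = (j + 1, 0) := by simp [revStep]; omega
  rw [iterate_succ_apply, hstep, revStep_iterate_of_lt (by omega) (by omega)]
  dsimp only
  omega

theorem revStep_iterate_diag {m j : ℕ} (hj : j ≤ m) :
    (revStep m)^[m - j + 1] (j, j) = (m - j, m - j) := by
  rcases hj.eq_or_lt with rfl | hj
  · simp [revStep]
  have hstep : revStep m (j, j) = (j + 1, 0) := by simp [revStep]; omega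
  have hlast : revStep m (m, m - j - 1) = (m - j, m - j) := by
    simp only [revStep, Prod.mk.injEq]
    split_ifs <;> omega
  rw [show m - j + 1 = (m - j - 1) + 1 + 1 by omega, iterate_succ_apply', iterate_succ_apply,
    hstep, revStep_iterate_of_lt (by omega) (by omega), show j + 1 + (m - j - 1) = m by omega,
    zero_add, hlast]

theorem minimalPeriod_revStep_diag {m i : ℕ} (hi : i ≤ m) (h2i : 2 * i ≠ m) :
    minimalPeriod (revStep m) (i, i) = m + 2 := by
  have hmid := revStep_iterate_diag hi
  have hback : (revStep m)^[i + 1] (m - i, m - i) = (i, i) := by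
    simpa [Nat.sub_sub_self hi] using revStep_iterate_diag (Nat.sub_le m i)
  have hper : IsPeriodicPt (revStep m) (m + 2) (i, i) := by
    rw [IsPeriodicPt, IsFixedPt, show m + 2 = (i + 1) + (m - i + 1) by omega,
      iterate_add_apply, hmid, hback]
  refine hper.minimalPeriod_eq (by omega) fun k hk0 hk hk_per => ?_
  have hdiag : ((revStep m)^[k] (i, i)).2 = ((revStep m)^[k] (i, i)).1 := by rw [hk_per]
  rcases lt_trichotomy k (m - i + 1) with hlt | rfl | hgt
  · exact (revStep_iterate_diag_snd_lt hk0 (by omega)).ne hdiag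
  · rw [hk_per] at hmid
    simp only [Prod.mk.injEq] at hmid
    omega
  · obtain ⟨k', rfl⟩ := Nat.exists_eq_add_of_lt hgt
    rw [add_assoc, add_comm, iterate_add_apply, hmid] at hdiag
    exact (revStep_iterate_diag_snd_lt (by omega) (by omega)).ne hdiag

def pairLower (m : ℕ) (p : ℕ × ℕ) : Set (Fin 2 × Fin m) :=
  pairSet (chainL m p.1) (chainL m p.2)

theorem mem_pairLower {m : ℕ} {p : ℕ × ℕ} {x : Fin 2 × Fin m} :
    x ∈ pairLower m p ↔ if (x.1 : ℕ) = 0 then (x.2 : ℕ) < p.1 else (x.2 : ℕ) < p.2 := by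
  simp only [pairLower, pairSet, chainL, Set.mem_ofPred_eq, Fin.ext_iff, Fin.val_zero]

theorem minimal_compl_pairLower_iff {m : ℕ} {p : ℕ × ℕ} (hp : p.2 ≤ p.1) (y : Fin 2 × Fin m) :
    Minimal (· ∈ (pairLower m p)ᶜ) y ↔
      ((y.1 : ℕ) = 0 ∧ (y.2 : ℕ) = p.1) ∨ ((y.1 : ℕ) = 1 ∧ (y.2 : ℕ) = p.2 ∧ p.2 < p.1) := by
  obtain ⟨a, b⟩ := p
  obtain ⟨⟨r, hr⟩, ⟨c, hc⟩⟩ := y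
  simp only [Minimal, Set.mem_compl_iff, mem_pairLower, Prod.forall, Prod.mk_le_mk,
    Fin.forall_iff, Fin.mk_le_mk] at hp ⊢
  constructor
  · rintro ⟨hy, hmin⟩
    by_cases hr0 : r = 0
    · rw [if_pos hr0] at hy
      have := hmin 0 (by omega) a (by omega) (by simp) ⟨by omega, by omega⟩
      omega
    rw [if_neg hr0] at hy
    rcases hp.lt_or_eq with hba | hba
    · have := hmin 1 (by omega) b (by omega) (by simp) ⟨by omega, by omega⟩
      omega
    · have := hmin 0 (by omega) b (by omega) (by simp; omega) ⟨by omega, by omega⟩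
      omega
  · rintro (⟨rfl, rfl⟩ | ⟨rfl, rfl, hba⟩)
    · refine ⟨by simp, fun r' _ c' _ hz hle => ?_⟩
      split_ifs at hz <;> omega
    · refine ⟨by simp, fun r' _ c' _ hz hle => ?_⟩
      split_ifs at hz <;> omega

theorem XRev_pairLower {m : ℕ} {p : ℕ × ℕ} (hp : p ∈ pairDom m) :
    XRev (pairLower m p) = pairLower m (revStep m p) := by
  obtain ⟨a, b⟩ := p
  obtain ⟨hba, ham⟩ := hp
  ext ⟨⟨r, hr⟩, ⟨c, hc⟩⟩
  simp only [XRev, Set.mem_ofPred_eq, minimal_compl_pairLower_iff hba, mem_pairLower, revStep,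
    Prod.exists, Prod.mk_le_mk, Fin.exists_iff, Fin.mk_le_mk] at hba ham ⊢
  constructor
  · rintro ⟨r', _, c', _, hy, hr', hc'⟩
    split_ifs <;> omega
  · intro h
    by_cases hrow0 : a < m ∧ r = 0 ∧ c ≤ a
    · exact ⟨0, by omega, a, hrow0.1, by simp, by omega, hrow0.2.2⟩
    · have hb : b < a ∧ c ≤ b := by split_ifs at h <;> omega
      exact ⟨1, by omega, b, by omega, by simp [hb.1], by omega, hb.2⟩

theorem chainL_injOn (k : ℕ) : Set.InjOn (chainL k) (Set.Iic k) := by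
  intro a ha a' ha' h
  by_contra hne
  wlog hlt : a < a' generalizing a a'
  · exact this ha' ha h.symm (Ne.symm hne) (by omega)
  have hmem : (⟨a, hlt.trans_le ha'⟩ : Fin k) ∈ chainL k a' := hlt
  rw [← h] at hmem
  exact lt_irrefl a hmem

theorem pairSet_inj {β : Type*} {I₁ I₂ J₁ J₂ : Set β} :
    pairSet I₁ I₂ = pairSet J₁ J₂ ↔ I₁ = J₁ ∧ I₂ = J₂ := by
  refine ⟨fun h => ⟨?_, ?_⟩, fun ⟨h₁, h₂⟩ => h₁ ▸ h₂ ▸ rfl⟩ <;> ext x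
  · simpa [pairSet] using Set.ext_iff.1 h (0, x)
  · simpa [pairSet] using Set.ext_iff.1 h (1, x)

theorem pairLower_injOn (m : ℕ) : Set.InjOn (pairLower m) (pairDom m) := by
  rintro ⟨a, b⟩ ⟨hba, ham⟩ ⟨a', b'⟩ ⟨hba', ham'⟩ h
  obtain ⟨ha, hb⟩ := pairSet_inj.1 h
  exact Prod.ext (chainL_injOn m ham ham' ha) (chainL_injOn m (hba.trans ham) (hba'.trans ham') hb)

theorem minimalPeriod_XRev_pairLower_diag {m i : ℕ} (hi : i ≤ m) (h2i : 2 * i ≠ m) :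
    minimalPeriod XRev (pairLower m (i, i)) = m + 2 := by
  rw [minimalPeriod_eq_of_injOn_of_semiconjOn (revStep_mapsTo m) (pairLower_injOn m)
    (fun _ hp => XRev_pairLower hp) ⟨le_rfl, hi⟩, minimalPeriod_revStep_diag hi h2i]

theorem stmt8 (n : ℕ) (hn : 3 ≤ n) (i : ℕ) (hi : i ≤ n - 2) :
    (XOrbit (pairSet (chainL (2 * n - 3) i) (chainL (2 * n - 3) i))).ncard = 2 * n - 1 ∧
      XRev^[2 * n - 1] (pairSet (chainL (2 * n - 3) i) (chainL (2 * n - 3) i))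
        = pairSet (chainL (2 * n - 3) i) (chainL (2 * n - 3) i) := by
  have hperiod : minimalPeriod XRev (pairLower (2 * n - 3) (i, i)) = 2 * n - 1 := by
    rw [minimalPeriod_XRev_pairLower_diag (by omega) (by omega)]
    omega
  refine ⟨?_, hperiod ▸ iterate_minimalPeriod⟩
  rw [← hperiod, ← ncard_range_iterate_eq_minimalPeriod
    (minimalPeriod_pos_iff_mem_periodicPts.1 (by omega))]
  rfl
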